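/- Let x* = (s*_i)_i be a pure profile, and suppose a > 0, M > 0 are such that v_{i s*_i}(x) − v_{i s_i}(x) ≥ a on U_M for all s_i ≠ s*_i, i. If the HEDGE algorithm with perfect mixed payoff observations and step-sizes γ_t > 0 is initialized in U_M, then for every player i and all t ≥ 1: z_{i s_i}(t+1) ≤ −M − a Σ_{j=1}^t γ_j for all s_i ≠ s*_i, and consequently the equilibrium-action probability satisfies x_{i s*_i}(t+1) ≥ 1 − (|S_i| − 1) e^{−M} e^{−a Σ_{j=1}^t γ_j}. -/

import Mathlib

/-! Each HEDGE step changes `z_{i s_i}` by `-γ_t (v_{i s*_i} - v_{i s_i})`, which is at most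
`-a γ_t` while the play is in `U_M`. Since the score differences then only decrease, the play
never leaves `U_M`, and induction gives the score bound. Under the logit map every
`x_{i s_i}` with `s_i ≠ s*_i` is at most `exp z_{i s_i}`, which gives the probability bound. -/

open Real Finset Filter Topology

noncomputable section

/-- Payoff to player `i` of pure strategy `b` against the mixed profile `x` of the
other players. -/
def purePay {N : ℕ} (S : Fin N → Type*) [∀ i, Fintype (S i)] [∀ i, DecidableEq (S i)]
    (u : ∀ _ : Fin N, (∀ j, S j) → ℝ) (i : Fin N) (b : S i) (x : ∀ j, S j → ℝ) : ℝ :=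
  ∑ s : ∀ j, S j, if s i = b then u i s * ∏ j ∈ univ.erase i, x j (s j) else 0

/-- The logit (exponential weights) map. -/
def logit {α : Type*} [Fintype α] (y : α → ℝ) : α → ℝ :=
  fun a => Real.exp (y a) / ∑ b, Real.exp (y b)

/-- `U_M = { x = Λ(y) : y_{i s_i} − y_{i s*_i} ≤ −M for all s_i ≠ s*_i, all i }`. -/
def inUM {N : ℕ} (S : Fin N → Type*) [∀ i, Fintype (S i)]
    (sstar : ∀ i, S i) (M : ℝ) (x : ∀ i, S i → ℝ) : Prop :=
  ∃ y : ∀ i, S i → ℝ, (∀ i, x i = logit (y i)) ∧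
    ∀ i, ∀ b : S i, b ≠ sstar i → y i b - y i (sstar i) ≤ -M

section Logit

variable {α : Type*} [Fintype α]

theorem sum_logit [Nonempty α] (y : α → ℝ) : ∑ b, logit y b = 1 := by
  have hpos : 0 < ∑ b, Real.exp (y b) :=
    Finset.sum_pos (fun b _ => Real.exp_pos _) Finset.univ_nonempty
  simp only [logit, ← Finset.sum_div, div_self hpos.ne']

theorem logit_le_exp_sub (y : α → ℝ) (b s : α) : logit y b ≤ Real.exp (y b - y s) := by
  have hle : Real.exp (y s) ≤ ∑ c, Real.exp (y c) :=
    Finset.single_le_sum (fun c _ => (Real.exp_pos _).le) (Finset.mem_univ s)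
  rw [Real.exp_sub, logit]
  gcongr

theorem logit_ge_one_sub_card_mul_exp [DecidableEq α] (y : α → ℝ) (s : α) (c : ℝ)
    (h : ∀ b, b ≠ s → y b - y s ≤ -c) :
    1 - ((Fintype.card α : ℝ) - 1) * Real.exp (-c) ≤ logit y s := by
  have : Nonempty α := ⟨s⟩
  have hrest : ∑ b ∈ univ.erase s, logit y b ≤ (univ.erase s).card • Real.exp (-c) :=
    Finset.sum_le_card_nsmul _ _ _ fun b hb =>
      (logit_le_exp_sub y b s).trans
        (Real.exp_le_exp.mpr (h b (Finset.mem_erase.mp hb).1))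
  have hcard : ((univ.erase s).card : ℝ) = (Fintype.card α : ℝ) - 1 := by
    rw [Finset.card_erase_of_mem (Finset.mem_univ s), Finset.card_univ,
      Nat.cast_sub Fintype.card_pos, Nat.cast_one]
  rw [nsmul_eq_mul, hcard] at hrest
  have hsplit := Finset.add_sum_erase univ (logit y) (Finset.mem_univ s)
  rw [sum_logit] at hsplit
  linarith

end Logit

theorem score_diff_step_le {α : Type*} {y y' v : α → ℝ} {γ a d : ℝ} {b s : α}
    (hy' : ∀ c, y' c = y c + γ * v c) (hγ : 0 ≤ γ) (hgap : a ≤ v s - v b)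
    (hd : y b - y s ≤ d) :
    y' b - y' s ≤ d - γ * a := by
  rw [hy', hy']
  nlinarith

theorem hedge_score_diff_le
    {N : ℕ} (S : Fin N → Type*) [∀ i, Fintype (S i)] [∀ i, DecidableEq (S i)]
    (u : ∀ _ : Fin N, (∀ j, S j) → ℝ) (sstar : ∀ i, S i) (a M : ℝ) (ha : 0 ≤ a)
    (hgap : ∀ x : ∀ i, S i → ℝ, inUM S sstar M x →
      ∀ i, ∀ b : S i, b ≠ sstar i → purePay S u i (sstar i) x - purePay S u i b x ≥ a)
    (γ : ℕ → ℝ) (hγ : ∀ t, 1 ≤ t → 0 ≤ γ t)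
    (y : ℕ → ∀ i, S i → ℝ) (x : ℕ → ∀ i, S i → ℝ)
    (hx : ∀ t, 1 ≤ t → ∀ i, x t i = logit (y t i))
    (hrec : ∀ t, 1 ≤ t → ∀ i, ∀ b : S i,
      y (t + 1) i b = y t i b + γ t * purePay S u i b (x t))
    (hinit : ∀ i, ∀ b : S i, b ≠ sstar i → y 1 i b - y 1 i (sstar i) ≤ -M) (t : ℕ) :
    ∀ i, ∀ b : S i, b ≠ sstar i →
      y (t + 1) i b - y (t + 1) i (sstar i) ≤ -M - a * ∑ j ∈ Finset.Icc 1 t, γ j := by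
  induction t with
  | zero => simpa using hinit
  | succ t ih =>
    have hsum : 0 ≤ a * ∑ j ∈ Finset.Icc 1 t, γ j :=
      mul_nonneg ha (Finset.sum_nonneg fun j hj => hγ j (Finset.mem_Icc.mp hj).1)
    have hUM : inUM S sstar M (x (t + 1)) :=
      ⟨y (t + 1), hx (t + 1) le_add_self, fun i b hb => (ih i b hb).trans (by linarith)⟩
    intro i b hb
    have hstep := score_diff_step_le (hrec (t + 1) le_add_self i)
      (hγ (t + 1) le_add_self) (hgap _ hUM i b hb) (ih i b hb)
    rw [Finset.sum_Icc_succ_top (by omega : 1 ≤ t + 1)]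
    linarith

theorem hedge_score_differences_and_equilibrium_probability_general
    {N : ℕ} (S : Fin N → Type*) [∀ i, Fintype (S i)] [∀ i, DecidableEq (S i)]
    (u : ∀ _ : Fin N, (∀ j, S j) → ℝ)
    (sstar : ∀ i, S i)
    (a M : ℝ) (ha : 0 < a)
    (hgap : ∀ x : ∀ i, S i → ℝ, inUM S sstar M x →
      ∀ i, ∀ b : S i, b ≠ sstar i →
        purePay S u i (sstar i) x - purePay S u i b x ≥ a)
    (γ : ℕ → ℝ) (hγ : ∀ t, 1 ≤ t → 0 < γ t)
    (y : ℕ → ∀ i, S i → ℝ) (x : ℕ → ∀ i, S i → ℝ)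
    (hx : ∀ t, 1 ≤ t → ∀ i, x t i = logit (y t i))
    (hrec : ∀ t, 1 ≤ t → ∀ i, ∀ b : S i,
      y (t + 1) i b = y t i b + γ t * purePay S u i b (x t))
    (hinit : ∀ i, ∀ b : S i, b ≠ sstar i → y 1 i b - y 1 i (sstar i) ≤ -M) :
    ∀ t, 1 ≤ t → ∀ i,
      (∀ b : S i, b ≠ sstar i →
        y (t + 1) i b - y (t + 1) i (sstar i) ≤ -M - a * ∑ j ∈ Finset.Icc 1 t, γ j) ∧
      x (t + 1) i (sstar i) ≥
        1 - ((Fintype.card (S i) : ℝ) - 1) * Real.exp (-M) *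
          Real.exp (-a * ∑ j ∈ Finset.Icc 1 t, γ j) := by
  intro t _ i
  have hscore := hedge_score_diff_le S u sstar a M ha.le hgap γ (fun t ht => (hγ t ht).le)
    y x hx hrec hinit t i
  refine ⟨hscore, ?_⟩
  have hprob := logit_ge_one_sub_card_mul_exp (y (t + 1) i) (sstar i)
    (M + a * ∑ j ∈ Finset.Icc 1 t, γ j) fun b hb => (hscore b hb).trans_eq (by ring)
  rw [hx (t + 1) le_add_self i, ge_iff_le]
  convert hprob using 2
  rw [mul_assoc, ← Real.exp_add]
  ring_nf

/-- Telescoping the one-step HEDGE bound: if HEDGE with perfect mixed payoff observations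
is initialized in `U_M`, then `z_{i s_i}(t+1) ≤ −M − a Σ_{j=1}^t γ_j` for all `s_i ≠ s*_i`,
and hence `x_{i s*_i}(t+1) ≥ 1 − (|S_i| − 1) e^{−M} e^{−a Σ_{j=1}^t γ_j}`. -/
theorem hedge_score_differences_and_equilibrium_probability
    {N : ℕ} (S : Fin N → Type*) [∀ i, Fintype (S i)] [∀ i, DecidableEq (S i)]
    (u : ∀ _ : Fin N, (∀ j, S j) → ℝ)
    (sstar : ∀ i, S i)
    (a M : ℝ) (ha : 0 < a) (hM : 0 < M)
    (hgap : ∀ x : ∀ i, S i → ℝ, inUM S sstar M x →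
      ∀ i, ∀ b : S i, b ≠ sstar i →
        purePay S u i (sstar i) x - purePay S u i b x ≥ a)
    (γ : ℕ → ℝ) (hγ : ∀ t, 1 ≤ t → 0 < γ t)
    (y : ℕ → ∀ i, S i → ℝ) (x : ℕ → ∀ i, S i → ℝ)
    (hx : ∀ t, 1 ≤ t → ∀ i, x t i = logit (y t i))
    (hrec : ∀ t, 1 ≤ t → ∀ i, ∀ b : S i,
      y (t + 1) i b = y t i b + γ t * purePay S u i b (x t))
    (hinit : ∀ i, ∀ b : S i, b ≠ sstar i → y 1 i b - y 1 i (sstar i) ≤ -M) :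
    ∀ t, 1 ≤ t → ∀ i,
      (∀ b : S i, b ≠ sstar i →
        y (t + 1) i b - y (t + 1) i (sstar i) ≤ -M - a * ∑ j ∈ Finset.Icc 1 t, γ j) ∧
      x (t + 1) i (sstar i) ≥
        1 - ((Fintype.card (S i) : ℝ) - 1) * Real.exp (-M) *
          Real.exp (-a * ∑ j ∈ Finset.Icc 1 t, γ j) :=
  hedge_score_differences_and_equilibrium_probability_general S u sstar a M ha hgap γ hγ y x hx hrec
    hinit
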